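/- arXiv:1512.03861 — 11 statements merged into one kernel-verified Lean document; each statement's English description precedes it below -/
import Mathlib

section
/- If Γ, φ ⊨ t₁^{l₁} @^{l₃} t₂^{l₂}, and also Γ, φ ⊨ t₁'^{l₁'} and Γ, φ ⊨ t₂'^{l₂'}, with Γ(l₁') ⊆ Γ(l₁), Γ(l₂') ⊆ Γ(l₂) and Γ(l₃') ⊇ Γ(l₃), then Γ, φ ⊨ t₁'^{l₁'} @^{l₃'} t₂'^{l₂'}. (SK Substitution Lemma) -/
/-!
Labelled SK-calculus and its 0CFA analysis, following
"0CFA for SK-calculus" (Lester).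
-/

namespace SK0CFA

/-- Sublabel names for the labelled SK-calculus. -/
inductive Sub : Type
  | S0 | S1 | S2 | S3 | SL | SR | K0
  deriving DecidableEq

/-- Labels: a base label `n : ℕ` or a base label with a sublabel name. -/
inductive Label : Type
  | base (n : ℕ)
  | sub (n : ℕ) (s : Sub)
  deriving DecidableEq

/-- Labelled SK-terms: `S^n`, `K^n`, labelled applications `t₁ @^l t₂`
and dummy leaves `⟨x⟩^l`. -/
inductive Term : Type
  | S (n : ℕ)
  | K (n : ℕ)
  | app (t₁ : Term) (l : Label) (t₂ : Term)
  | var (l : Label)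
  deriving DecidableEq

/-- The top-level label of a labelled term. -/
def Term.label : Term → Label
  | .S n => .base n
  | .K n => .base n
  | .app _ l _ => l
  | .var l => l

/-- Abstract values: `S₀ⁿ, S₁ⁿ, S₂ⁿ, K₀ⁿ, K₁ⁿ`. -/
inductive Abs : Type
  | S0 (n : ℕ)
  | S1 (n : ℕ)
  | S2 (n : ℕ)
  | K0 (n : ℕ)
  | K1 (n : ℕ)
  deriving DecidableEq

/-- The constraints generated by an application node whose function part has
label `l₁`, argument part label `l₂`, and whose own label is `l₃`. -/
def AppC (Γ : Label → Set Abs) (φ : Label → Bool) (l₁ l₂ l₃ : Label) : Prop :=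
  (∀ n, Abs.S0 n ∈ Γ l₁ → Γ l₂ ⊆ Γ (.sub n .S0) ∧ Abs.S1 n ∈ Γ l₃) ∧
  (∀ n, Abs.S1 n ∈ Γ l₁ → Γ l₂ ⊆ Γ (.sub n .S1) ∧ Abs.S2 n ∈ Γ l₃) ∧
  (∀ n, Abs.S2 n ∈ Γ l₁ →
    Γ l₂ ⊆ Γ (.sub n .S2) ∧ Γ (.sub n .S3) ⊆ Γ l₃ ∧ φ (.base n) = true) ∧
  (∀ n, Abs.K0 n ∈ Γ l₁ → Γ l₂ ⊆ Γ (.sub n .K0) ∧ Abs.K1 n ∈ Γ l₃) ∧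
  (∀ n, Abs.K1 n ∈ Γ l₁ → Γ (.sub n .K0) ⊆ Γ l₃)

/-- `t_{Sⁿ} := (⟨f⟩^{n.S0} @^{n.SL} ⟨x⟩^{n.S2}) @^{n.S3} (⟨g⟩^{n.S1} @^{n.SR} ⟨x⟩^{n.S2})`. -/
def tS (n : ℕ) : Term :=
  .app (.app (.var (.sub n .S0)) (.sub n .SL) (.var (.sub n .S2)))
       (.sub n .S3)
       (.app (.var (.sub n .S1)) (.sub n .SR) (.var (.sub n .S2)))

/-- A size measure used only to justify the well-foundedness of `Sat`. -/
def Term.size : Term → ℕ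
  | .S _ => 8
  | .K _ => 1
  | .var _ => 1
  | .app t₁ _ t₂ => t₁.size + t₂.size + 1

/-- The 0CFA acceptability judgement `Γ, φ ⊨ t` for labelled SK-terms. -/
def Sat (Γ : Label → Set Abs) (φ : Label → Bool) : Term → Prop
  | .S n => Abs.S0 n ∈ Γ (.base n) ∧ (φ (.base n) = true → Sat Γ φ (tS n))
  | .K n => Abs.K0 n ∈ Γ (.base n)
  | .var _ => True
  | .app t₁ l₃ t₂ => Sat Γ φ t₁ ∧ Sat Γ φ t₂ ∧ AppC Γ φ t₁.label t₂.label l₃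
termination_by t => t.size
decreasing_by all_goals simp [Term.size, tS] <;> omega

/-- Top-level labelled SK-reductions. -/
inductive Red : Term → Term → Prop
  | K (n : ℕ) (l₃ l₄ : Label) (x y : Term) :
      Red (.app (.app (.K n) l₃ x) l₄ y) x
  | S (n : ℕ) (l₄ l₅ l₆ : Label) (f g x : Term) :
      Red (.app (.app (.app (.S n) l₄ f) l₅ g) l₆ x)
          (.app (.app f (.sub n .SL) x) (.sub n .S3) (.app g (.sub n .SR) x))

/-- Term contexts. -/
inductive Ctx : Type
  | hole
  | appL (C : Ctx) (l : Label) (t : Term)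
  | appR (t : Term) (l : Label) (C : Ctx)

/-- Plugging a term into a context. -/
def Ctx.fill : Ctx → Term → Term
  | .hole, t => t
  | .appL C l u, t => .app (C.fill t) l u
  | .appR u l C, t => .app u l (C.fill t)

/-- One-step contextual labelled SK-reduction. -/
def Step (t t' : Term) : Prop :=
  ∃ (C : Ctx) (u u' : Term), Red u u' ∧ t = C.fill u ∧ t' = C.fill u'

/-- **SK Substitution Lemma.**
If `Γ, φ ⊨ t₁^{l₁} @^{l₃} t₂^{l₂}`, and also `Γ, φ ⊨ t₁'^{l₁'}` and
`Γ, φ ⊨ t₂'^{l₂'}`, with `Γ(l₁') ⊆ Γ(l₁)`, `Γ(l₂') ⊆ Γ(l₂)` and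
`Γ(l₃') ⊇ Γ(l₃)`, then `Γ, φ ⊨ t₁'^{l₁'} @^{l₃'} t₂'^{l₂'}`. -/
theorem sk_substitution
    (Γ : Label → Set Abs) (φ : Label → Bool)
    (t₁ t₂ t₁' t₂' : Term) (l₃ l₃' : Label)
    (h : Sat Γ φ (.app t₁ l₃ t₂))
    (h₁ : Sat Γ φ t₁') (h₂ : Sat Γ φ t₂')
    (s₁ : Γ t₁'.label ⊆ Γ t₁.label)
    (s₂ : Γ t₂'.label ⊆ Γ t₂.label)
    (s₃ : Γ l₃ ⊆ Γ l₃') :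
    Sat Γ φ (.app t₁' l₃' t₂') := by
  rw [Sat] at h ⊢
  obtain ⟨hs1, hs2, A, B, C, D, E⟩ := h
  refine ⟨h₁, h₂, fun n hn => ?_, fun n hn => ?_, fun n hn => ?_,
    fun n hn => ?_, fun n hn => ?_⟩
  · exact ⟨s₂.trans (A n (s₁ hn)).1, s₃ (A n (s₁ hn)).2⟩
  · exact ⟨s₂.trans (B n (s₁ hn)).1, s₃ (B n (s₁ hn)).2⟩
  · exact ⟨s₂.trans (C n (s₁ hn)).1, (C n (s₁ hn)).2.1.trans s₃, (C n (s₁ hn)).2.2⟩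
  · exact ⟨s₂.trans (D n (s₁ hn)).1, s₃ (D n (s₁ hn)).2⟩
  · exact (E n (s₁ hn)).trans s₃

end SK0CFA
end

section
/- For any top-level labelled SK-reduction t^l → t'^{l'} (either K^{l₂} @^{l₃} x^{l₁} @^{l₄} y^{l₀} → x^{l₁}, or S^{l₃} @^{l₄} f^{l₂} @^{l₅} g^{l₁} @^{l₆} x^{l₀} → (f^{l₂} @^{l₃.S.L} x^{l₀}) @^{l₃.S.3} (g^{l₁} @^{l₃.S.R} x^{l₀})), if Γ, φ ⊨ t^l then (1) Γ, φ ⊨ t'^{l'} and (2) Γ(l') ⊆ Γ(l). (SK Reduction Coherence Lemma) -/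
/-!
Labelled SK-calculus and its 0CFA analysis, following
"0CFA for SK-calculus" (Lester).
-/

namespace SK0CFA

theorem AppC_mono {Γ : Label → Set Abs} {φ : Label → Bool}
    {l₁ l₂ l₁' l₂' l₃ : Label}
    (h1 : Γ l₁' ⊆ Γ l₁) (h2 : Γ l₂' ⊆ Γ l₂)
    (h : AppC Γ φ l₁ l₂ l₃) : AppC Γ φ l₁' l₂' l₃ := by
  obtain ⟨a, b, c, d, e⟩ := h
  refine ⟨fun n hn => ?_, fun n hn => ?_, fun n hn => ?_, fun n hn => ?_,
    fun n hn => ?_⟩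
  · exact ⟨h2.trans (a n (h1 hn)).1, (a n (h1 hn)).2⟩
  · exact ⟨h2.trans (b n (h1 hn)).1, (b n (h1 hn)).2⟩
  · exact ⟨h2.trans (c n (h1 hn)).1, (c n (h1 hn)).2.1, (c n (h1 hn)).2.2⟩
  · exact ⟨h2.trans (d n (h1 hn)).1, (d n (h1 hn)).2⟩
  · exact e n (h1 hn)

/-- **SK Reduction Coherence Lemma.**
For any top-level labelled SK-reduction `t^l → t'^{l'}`, if `Γ, φ ⊨ t^l`
then (1) `Γ, φ ⊨ t'^{l'}` and (2) `Γ(l') ⊆ Γ(l)`. -/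
theorem sk_reduction_coherence
    (Γ : Label → Set Abs) (φ : Label → Bool)
    (t t' : Term) (hred : Red t t') (h : Sat Γ φ t) :
    Sat Γ φ t' ∧ Γ t'.label ⊆ Γ t.label := by
  cases hred with
  | K n l₃ l₄ x y =>
    simp only [Sat] at h
    obtain ⟨⟨hK, hx, hA1⟩, hy, hA2⟩ := h
    simp only [Sat, Term.label] at hA1 hA2
    obtain ⟨hx0, hK1⟩ := hA1.2.2.2.1 n hK
    have hsub := hA2.2.2.2.2 n hK1
    exact ⟨hx, hx0.trans hsub⟩
  | S n l₄ l₅ l₆ f g x =>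
    simp only [Sat] at h
    obtain ⟨⟨⟨⟨hS0, hSt⟩, hf, hA1⟩, hg, hA2⟩, hx, hA3⟩ := h
    simp only [Term.label] at hA1 hA2 hA3
    obtain ⟨hf0, hS1⟩ := hA1.1 n hS0
    obtain ⟨hg0, hS2⟩ := hA2.2.1 n hS1
    obtain ⟨hx0, hS3, hφ⟩ := hA3.2.2.1 n hS2
    have hts := hSt hφ
    simp only [tS, Sat] at hts
    obtain ⟨⟨_, _, hAL⟩, ⟨_, _, hAR⟩, hA⟩ := hts
    simp only [Term.label] at hAL hAR hA
    refine ⟨?_, hS3⟩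
    simp only [Sat, Term.label]
    exact ⟨⟨hf, hx, AppC_mono hf0 hx0 hAL⟩, ⟨hg, hx, AppC_mono hg0 hx0 hAR⟩, hA⟩


end SK0CFA
end

section
/- For any labelled SK-reduction in a context, C[t^{l₁}]^{l₂} → C[t'^{l₁'}]^{l₂'} (where t^{l₁} → t'^{l₁'} is a top-level labelled SK-reduction and C is an arbitrary term context), if Γ, φ ⊨ C[t^{l₁}]^{l₂} then (1) Γ, φ ⊨ C[t'^{l₁'}]^{l₂'} and (2) Γ(l₂') ⊆ Γ(l₂). (SK Evaluation Coherence Theorem) -/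
/-!
Labelled SK-calculus and its 0CFA analysis, following
"0CFA for SK-calculus" (Lester).
-/

namespace SK0CFA

lemma appC_mono (Γ : Label → Set Abs) (φ : Label → Bool)
    {a b c a' b' : Label} (h : AppC Γ φ a b c)
    (ha : Γ a' ⊆ Γ a) (hb : Γ b' ⊆ Γ b) : AppC Γ φ a' b' c := by
  obtain ⟨h0, h1, h2, h3, h4⟩ := h
  refine ⟨fun n hn => ?_, fun n hn => ?_, fun n hn => ?_, fun n hn => ?_, fun n hn => ?_⟩
  · exact ⟨hb.trans (h0 n (ha hn)).1, (h0 n (ha hn)).2⟩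
  · exact ⟨hb.trans (h1 n (ha hn)).1, (h1 n (ha hn)).2⟩
  · exact ⟨hb.trans (h2 n (ha hn)).1, (h2 n (ha hn)).2.1, (h2 n (ha hn)).2.2⟩
  · exact ⟨hb.trans (h3 n (ha hn)).1, (h3 n (ha hn)).2⟩
  · exact h4 n (ha hn)

lemma red_coherence (Γ : Label → Set Abs) (φ : Label → Bool)
    {u u' : Term} (hred : Red u u') (hs : Sat Γ φ u) :
    Sat Γ φ u' ∧ Γ u'.label ⊆ Γ u.label := by
  cases hred with
  | K n l₃ l₄ x y =>
    simp only [Sat] at hs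
    obtain ⟨h1, _, hA⟩ := hs
    obtain ⟨hK, hx, hAin⟩ := h1
    have hK1 := (hAin.2.2.2.1 n hK)
    have hfin := hA.2.2.2.2 n hK1.2
    exact ⟨hx, hK1.1.trans hfin⟩
  | S n l₄ l₅ l₆ f g x =>
    simp only [Sat] at hs
    obtain ⟨h1, hx, hA3⟩ := hs
    obtain ⟨h2, hg, hA2⟩ := h1
    obtain ⟨hS, hf, hA1⟩ := h2
    obtain ⟨hS0, hTS⟩ := hS
    have c1 := hA1.1 n hS0
    have c2 := hA2.2.1 n c1.2
    have c3 := hA3.2.2.1 n c2.2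
    have hts := hTS c3.2.2
    simp only [tS, Sat] at hts
    obtain ⟨htl, htr, hAS3⟩ := hts
    obtain ⟨_, _, hASL⟩ := htl
    obtain ⟨_, _, hASR⟩ := htr
    refine ⟨?_, c3.2.1⟩
    simp only [Sat]
    exact ⟨⟨hf, hx, appC_mono Γ φ hASL c1.1 c3.1⟩,
      ⟨hg, hx, appC_mono Γ φ hASR c2.1 c3.1⟩, hAS3⟩

/-- **SK Evaluation Coherence Theorem.**
For any labelled SK-reduction in a context, `C[t^{l₁}]^{l₂} → C[t'^{l₁'}]^{l₂'}`
(where `t^{l₁} → t'^{l₁'}` is a top-level labelled SK-reduction and `C` is an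
arbitrary term context), if `Γ, φ ⊨ C[t^{l₁}]^{l₂}` then
(1) `Γ, φ ⊨ C[t'^{l₁'}]^{l₂'}` and (2) `Γ(l₂') ⊆ Γ(l₂)`. -/
theorem sk_evaluation_coherence
    (Γ : Label → Set Abs) (φ : Label → Bool)
    (C : Ctx) (t t' : Term) (hred : Red t t')
    (h : Sat Γ φ (C.fill t)) :
    Sat Γ φ (C.fill t') ∧ Γ (C.fill t').label ⊆ Γ (C.fill t).label := by
  induction C with
  | hole => exact red_coherence Γ φ hred h
  | appL C l u ih =>
    rw [Ctx.fill, Sat] at h ⊢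
    obtain ⟨h1, h2, hA⟩ := h
    obtain ⟨hs', hsub⟩ := ih h1
    exact ⟨⟨hs', h2, appC_mono Γ φ hA hsub (subset_refl _)⟩, subset_refl _⟩
  | appR u l C ih =>
    rw [Ctx.fill, Sat] at h ⊢
    obtain ⟨h1, h2, hA⟩ := h
    obtain ⟨hs', hsub⟩ := ih h2
    exact ⟨⟨h1, hs', appC_mono Γ φ hA (subset_refl _) hsub⟩, subset_refl _⟩

end SK0CFA
end

section
/- If Γ, φ ⊨ t^l and t →* t' in the labelled SK-calculus (the reflexive-transitive closure of one-step contextual labelled SK-reduction), then Γ, φ ⊨ t'^{l'}, where l' is the top-level label of t'. (SK Soundness) -/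
/-!
Labelled SK-calculus and its 0CFA analysis, following
"0CFA for SK-calculus" (Lester).
-/

namespace SK0CFA

lemma sat_app_iff (Γ : Label → Set Abs) (φ : Label → Bool) (t₁ : Term) (l₃ : Label)
    (t₂ : Term) :
    Sat Γ φ (.app t₁ l₃ t₂) ↔
      Sat Γ φ t₁ ∧ Sat Γ φ t₂ ∧ AppC Γ φ t₁.label t₂.label l₃ := by
  rw [Sat]

lemma appC_mono_s3 {Γ : Label → Set Abs} {φ : Label → Bool} {l₁ l₂ l₃ l₁' l₂' : Label}
    (h : AppC Γ φ l₁ l₂ l₃) (h₁ : Γ l₁' ⊆ Γ l₁) (h₂ : Γ l₂' ⊆ Γ l₂) :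
    AppC Γ φ l₁' l₂' l₃ := by
  obtain ⟨hS0, hS1, hS2, hK0, hK1⟩ := h
  refine ⟨fun n hn => ?_, fun n hn => ?_, fun n hn => ?_, fun n hn => ?_, fun n hn => ?_⟩
  · exact ⟨h₂.trans (hS0 n (h₁ hn)).1, (hS0 n (h₁ hn)).2⟩
  · exact ⟨h₂.trans (hS1 n (h₁ hn)).1, (hS1 n (h₁ hn)).2⟩
  · exact ⟨h₂.trans (hS2 n (h₁ hn)).1, (hS2 n (h₁ hn)).2.1, (hS2 n (h₁ hn)).2.2⟩
  · exact ⟨h₂.trans (hK0 n (h₁ hn)).1, (hK0 n (h₁ hn)).2⟩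
  · exact hK1 n (h₁ hn)

lemma red_sound {Γ : Label → Set Abs} {φ : Label → Bool} {u u' : Term}
    (hr : Red u u') (h : Sat Γ φ u) :
    Sat Γ φ u' ∧ Γ u'.label ⊆ Γ u.label := by
  cases hr with
  | K n l₃ l₄ x y =>
    rw [sat_app_iff] at h
    obtain ⟨h₁, _, hC⟩ := h
    rw [sat_app_iff] at h₁
    obtain ⟨hK, hx, hC'⟩ := h₁
    rw [Sat] at hK
    obtain ⟨hsub, hK1⟩ := (hC'.2.2.2.1) n hK
    have := (hC.2.2.2.2) n hK1
    exact ⟨hx, hsub.trans this⟩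
  | S n l₄ l₅ l₆ f g x =>
    rw [sat_app_iff] at h
    obtain ⟨h₁, hx, hC3⟩ := h
    rw [sat_app_iff] at h₁
    obtain ⟨h₂, hg, hC2⟩ := h₁
    rw [sat_app_iff] at h₂
    obtain ⟨hS, hf, hC1⟩ := h₂
    rw [Sat] at hS
    obtain ⟨hS0, hφ⟩ := hS
    obtain ⟨hfsub, hS1⟩ := hC1.1 n hS0
    obtain ⟨hgsub, hS2⟩ := hC2.2.1 n hS1
    obtain ⟨hxsub, hS3sub, hphi⟩ := hC3.2.2.1 n hS2
    have htS := hφ hphi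
    rw [tS, sat_app_iff] at htS
    obtain ⟨hL, hR, hCout⟩ := htS
    rw [sat_app_iff] at hL hR
    obtain ⟨_, _, hCL⟩ := hL
    obtain ⟨_, _, hCR⟩ := hR
    refine ⟨?_, hS3sub⟩
    rw [sat_app_iff]
    refine ⟨?_, ?_, ?_⟩
    · rw [sat_app_iff]
      exact ⟨hf, hx, appC_mono_s3 hCL hfsub hxsub⟩
    · rw [sat_app_iff]
      exact ⟨hg, hx, appC_mono_s3 hCR hgsub hxsub⟩
    · exact hCout

lemma ctx_sound {Γ : Label → Set Abs} {φ : Label → Bool} (C : Ctx) {u u' : Term}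
    (hu : Sat Γ φ u' ∧ Γ u'.label ⊆ Γ u.label)
    (h : Sat Γ φ (C.fill u)) :
    Sat Γ φ (C.fill u') ∧ Γ (C.fill u').label ⊆ Γ (C.fill u).label := by
  induction C with
  | hole => exact hu
  | appL C l t ih =>
    rw [Ctx.fill, sat_app_iff] at h ⊢
    obtain ⟨h₁, h₂, hC⟩ := h
    obtain ⟨hs, hsub⟩ := ih h₁
    exact ⟨⟨hs, h₂, appC_mono_s3 hC hsub (subset_refl _)⟩, subset_refl _⟩
  | appR t l C ih =>
    rw [Ctx.fill, sat_app_iff] at h ⊢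
    obtain ⟨h₁, h₂, hC⟩ := h
    obtain ⟨hs, hsub⟩ := ih h₂
    exact ⟨⟨h₁, hs, appC_mono_s3 hC (subset_refl _) hsub⟩, subset_refl _⟩

lemma step_sound {Γ : Label → Set Abs} {φ : Label → Bool} {t t' : Term}
    (hs : Step t t') (h : Sat Γ φ t) : Sat Γ φ t' := by
  obtain ⟨C, u, u', hr, rfl, rfl⟩ := hs
  exact (ctx_sound C (red_sound hr (by
    clear hr
    induction C with
    | hole => exact h
    | appL C l t ih => rw [Ctx.fill, sat_app_iff] at h; exact ih h.1
    | appR t l C ih => rw [Ctx.fill, sat_app_iff] at h; exact ih h.2.1)) h).1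

/-- **SK Soundness.**
If `Γ, φ ⊨ t^l` and `t →* t'` in the labelled SK-calculus (the
reflexive-transitive closure of one-step contextual labelled SK-reduction),
then `Γ, φ ⊨ t'^{l'}`, where `l'` is the top-level label of `t'`. -/
theorem sk_soundness
    (Γ : Label → Set Abs) (φ : Label → Bool)
    (t t' : Term) (h : Sat Γ φ t)
    (hsteps : Relation.ReflTransGen Step t t') :
    Sat Γ φ t' := by
  induction hsteps with
  | refl => exact h
  | tail _ hstep ih => exact step_sound hstep ih

end SK0CFA
end

section
/- If Γ, φ ⊨ t₁^{l₁} @^{l₃} t₂^{l₂}, and also Γ, φ ⊨ t₁'^{l₁'} and Γ, φ ⊨ t₂'^{l₂'}, with Γ(l₁') ⊆ Γ(l₁), Γ(l₂') ⊆ Γ(l₂) and Γ(l₃') ⊇ Γ(l₃), then Γ, φ ⊨ t₁'^{l₁'} @^{l₃'} t₂'^{l₂'}. (SF Substitution Lemma) -/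
/-!
Labelled SF-calculus and its 0CFA analysis, following
"0CFA for SF-calculus" (Lester).
-/

namespace SF0CFA

/-- Sublabel names for the labelled SF-calculus. -/
inductive Sub : Type
  | S0 | S1 | S2 | S3 | SL | SR
  | F0 | F1 | F2 | F3 | FL | FR | FM
  deriving DecidableEq

/-- Labels: a base label `n : ℕ` or a base label with a sublabel name. -/
inductive Label : Type
  | base (n : ℕ)
  | sub (n : ℕ) (s : Sub)
  deriving DecidableEq

/-- Labelled SF-terms: `S^n`, `F^n`, labelled applications `t₁ @^l t₂`
and dummy leaves `⟨x⟩^l`. -/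
inductive Term : Type
  | S (n : ℕ)
  | F (n : ℕ)
  | app (t₁ : Term) (l : Label) (t₂ : Term)
  | var (l : Label)
  deriving DecidableEq

/-- The top-level label of a labelled term. -/
def Term.label : Term → Label
  | .S n => .base n
  | .F n => .base n
  | .app _ l _ => l
  | .var l => l

/-- Abstract values: `S₀ⁿ, S₁ⁿ, S₂ⁿ, F₀ⁿ, F₁ⁿ, F₂ⁿ` and `@^{(l₁,l₂)}`. -/
inductive Abs : Type
  | S0 (n : ℕ)
  | S1 (n : ℕ)
  | S2 (n : ℕ)
  | F0 (n : ℕ)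
  | F1 (n : ℕ)
  | F2 (n : ℕ)
  | app (l₁ l₂ : Label)
  deriving DecidableEq

/-- The constraints generated by an application node whose function part has
label `l₁`, argument part label `l₂`, and whose own label is `l₃`. -/
def AppC (Γ : Label → Set Abs) (φ : Label → Bool) (l₁ l₂ l₃ : Label) : Prop :=
  (∃ l₄ l₅, Abs.app l₄ l₅ ∈ Γ l₃ ∧ Γ l₁ ⊆ Γ l₄ ∧ Γ l₂ ⊆ Γ l₅) ∧
  (∀ n, Abs.S0 n ∈ Γ l₁ → Γ l₂ ⊆ Γ (.sub n .S0) ∧ Abs.S1 n ∈ Γ l₃) ∧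
  (∀ n, Abs.S1 n ∈ Γ l₁ → Γ l₂ ⊆ Γ (.sub n .S1) ∧ Abs.S2 n ∈ Γ l₃) ∧
  (∀ n, Abs.S2 n ∈ Γ l₁ →
    Γ l₂ ⊆ Γ (.sub n .S2) ∧ Γ (.sub n .S3) ⊆ Γ l₃ ∧ φ (.base n) = true) ∧
  (∀ n, Abs.F0 n ∈ Γ l₁ → Γ l₂ ⊆ Γ (.sub n .F0) ∧ Abs.F1 n ∈ Γ l₃) ∧
  (∀ n, Abs.F1 n ∈ Γ l₁ → Γ l₂ ⊆ Γ (.sub n .F1) ∧ Abs.F2 n ∈ Γ l₃) ∧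
  (∀ n, Abs.F2 n ∈ Γ l₁ →
    Γ l₂ ⊆ Γ (.sub n .F2) ∧ Γ (.sub n .F3) ⊆ Γ l₃ ∧ φ (.base n) = true)

/-- `t_{Sⁿ} := (⟨f⟩^{n.S0} @^{n.SL} ⟨x⟩^{n.S2}) @^{n.S3} (⟨g⟩^{n.S1} @^{n.SR} ⟨x⟩^{n.S2})`. -/
def tS (n : ℕ) : Term :=
  .app (.app (.var (.sub n .S0)) (.sub n .SL) (.var (.sub n .S2)))
       (.sub n .S3)
       (.app (.var (.sub n .S1)) (.sub n .SR) (.var (.sub n .S2)))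

/-- `t_{Fⁿ} := (⟨y⟩^{n.F2} @^{n.FM} ⟨u⟩^{n.FL}) @^{n.F3} ⟨v⟩^{n.FR}`. -/
def tF (n : ℕ) : Term :=
  .app (.app (.var (.sub n .F2)) (.sub n .FM) (.var (.sub n .FL)))
       (.sub n .F3)
       (.var (.sub n .FR))

/-- A size measure used only to justify the well-foundedness of `Sat`. -/
def Term.size : Term → ℕ
  | .S _ => 8
  | .F _ => 8
  | .var _ => 1
  | .app t₁ _ t₂ => t₁.size + t₂.size + 1

/-- The 0CFA acceptability judgement `Γ, φ ⊨ t` for labelled SF-terms. -/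
def Sat (Γ : Label → Set Abs) (φ : Label → Bool) : Term → Prop
  | .S n => Abs.S0 n ∈ Γ (.base n) ∧ (φ (.base n) = true → Sat Γ φ (tS n))
  | .F n =>
      Abs.F0 n ∈ Γ (.base n) ∧
      (φ (.base n) = true →
        (∃ n₀, Abs.S0 n₀ ∈ Γ (.sub n .F0) ∨ Abs.F0 n₀ ∈ Γ (.sub n .F0)) →
        Γ (.sub n .F1) ⊆ Γ (.sub n .F3)) ∧
      (φ (.base n) = true →
        (∃ n₀, Abs.S1 n₀ ∈ Γ (.sub n .F0) ∨ Abs.S2 n₀ ∈ Γ (.sub n .F0) ∨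
               Abs.F1 n₀ ∈ Γ (.sub n .F0) ∨ Abs.F2 n₀ ∈ Γ (.sub n .F0)) →
        Sat Γ φ (tF n) ∧
        ∀ l₁ l₂, Abs.app l₁ l₂ ∈ Γ (.sub n .F0) →
          Γ l₁ ⊆ Γ (.sub n .FL) ∧ Γ l₂ ⊆ Γ (.sub n .FR))
  | .var _ => True
  | .app t₁ l₃ t₂ => Sat Γ φ t₁ ∧ Sat Γ φ t₂ ∧ AppC Γ φ t₁.label t₂.label l₃
termination_by t => t.size
decreasing_by all_goals simp [Term.size, tS, tF] <;> omega

/-- Factorable forms: terms of the shape `S`, `S u`, `S u v`, `F`, `F u`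
or `F u v` (applications carrying arbitrary labels). -/
inductive Factorable : Term → Prop
  | S (n : ℕ) : Factorable (.S n)
  | F (n : ℕ) : Factorable (.F n)
  | S1 (n : ℕ) (l : Label) (u : Term) : Factorable (.app (.S n) l u)
  | F1 (n : ℕ) (l : Label) (u : Term) : Factorable (.app (.F n) l u)
  | S2 (n : ℕ) (l₁ l₂ : Label) (u v : Term) :
      Factorable (.app (.app (.S n) l₁ u) l₂ v)
  | F2 (n : ℕ) (l₁ l₂ : Label) (u v : Term) :
      Factorable (.app (.app (.F n) l₁ u) l₂ v)

/-- Top-level labelled SF-reductions. -/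
inductive Red : Term → Term → Prop
  | S (n : ℕ) (l₄ l₅ l₆ : Label) (f g x : Term) :
      Red (.app (.app (.app (.S n) l₄ f) l₅ g) l₆ x)
          (.app (.app f (.sub n .SL) x) (.sub n .S3) (.app g (.sub n .SR) x))
  | Fatom (n : ℕ) (l₄ l₅ l₆ : Label) (f x y : Term)
      (hf : (∃ m, f = .S m) ∨ (∃ m, f = .F m)) :
      Red (.app (.app (.app (.F n) l₄ f) l₅ x) l₆ y) x
  | Ffact (n : ℕ) (l₂ l₄ l₅ l₆ : Label) (u v x y : Term)
      (hf : Factorable (.app u l₂ v)) :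
      Red (.app (.app (.app (.F n) l₄ (.app u l₂ v)) l₅ x) l₆ y)
          (.app (.app y (.sub n .FM) u) (.sub n .F3) v)

/-- Term contexts. -/
inductive Ctx : Type
  | hole
  | appL (C : Ctx) (l : Label) (t : Term)
  | appR (t : Term) (l : Label) (C : Ctx)

/-- Plugging a term into a context. -/
def Ctx.fill : Ctx → Term → Term
  | .hole, t => t
  | .appL C l u, t => .app (C.fill t) l u
  | .appR u l C, t => .app u l (C.fill t)

/-- One-step contextual labelled SF-reduction. -/
def Step (t t' : Term) : Prop :=
  ∃ (C : Ctx) (u u' : Term), Red u u' ∧ t = C.fill u ∧ t' = C.fill u'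

/-- **SF Substitution Lemma.**
If `Γ, φ ⊨ t₁^{l₁} @^{l₃} t₂^{l₂}`, and also `Γ, φ ⊨ t₁'^{l₁'}` and
`Γ, φ ⊨ t₂'^{l₂'}`, with `Γ(l₁') ⊆ Γ(l₁)`, `Γ(l₂') ⊆ Γ(l₂)` and
`Γ(l₃') ⊇ Γ(l₃)`, then `Γ, φ ⊨ t₁'^{l₁'} @^{l₃'} t₂'^{l₂'}`. -/
theorem sf_substitution
    (Γ : Label → Set Abs) (φ : Label → Bool)
    (t₁ t₂ t₁' t₂' : Term) (l₃ l₃' : Label)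
    (h : Sat Γ φ (.app t₁ l₃ t₂))
    (h₁ : Sat Γ φ t₁') (h₂ : Sat Γ φ t₂')
    (s₁ : Γ t₁'.label ⊆ Γ t₁.label)
    (s₂ : Γ t₂'.label ⊆ Γ t₂.label)
    (s₃ : Γ l₃ ⊆ Γ l₃') :
    Sat Γ φ (.app t₁' l₃' t₂') := by
  rw [Sat] at h ⊢
  refine ⟨h₁, h₂, ?_⟩
  obtain ⟨-, -, ⟨l₄, l₅, ha, hs4, hs5⟩, c1, c2, c3, c4, c5, c6⟩ := h
  refine ⟨⟨l₄, l₅, s₃ ha, fun a hx => hs4 (s₁ hx), fun a hx => hs5 (s₂ hx)⟩,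
    ?_, ?_, ?_, ?_, ?_, ?_⟩
  · exact fun n hn => ⟨fun a hx => (c1 n (s₁ hn)).1 (s₂ hx), s₃ (c1 n (s₁ hn)).2⟩
  · exact fun n hn => ⟨fun a hx => (c2 n (s₁ hn)).1 (s₂ hx), s₃ (c2 n (s₁ hn)).2⟩
  · exact fun n hn => ⟨fun a hx => (c3 n (s₁ hn)).1 (s₂ hx),
      fun a hx => s₃ ((c3 n (s₁ hn)).2.1 hx), (c3 n (s₁ hn)).2.2⟩
  · exact fun n hn => ⟨fun a hx => (c4 n (s₁ hn)).1 (s₂ hx), s₃ (c4 n (s₁ hn)).2⟩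
  · exact fun n hn => ⟨fun a hx => (c5 n (s₁ hn)).1 (s₂ hx), s₃ (c5 n (s₁ hn)).2⟩
  · exact fun n hn => ⟨fun a hx => (c6 n (s₁ hn)).1 (s₂ hx),
      fun a hx => s₃ ((c6 n (s₁ hn)).2.1 hx), (c6 n (s₁ hn)).2.2⟩

end SF0CFA
end

section
/- For any top-level labelled SF-reduction t^l → t'^{l'}, if Γ, φ ⊨ t^l then (1) Γ, φ ⊨ t'^{l'} and (2) Γ(l') ⊆ Γ(l). (SF Reduction Coherence Lemma) -/
/-!
Labelled SF-calculus and its 0CFA analysis, following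
"0CFA for SF-calculus" (Lester).
-/

namespace SF0CFA

theorem appC_mono {Γ : Label → Set Abs} {φ : Label → Bool} {l₁ l₂ l₃ l₁' l₂' : Label}
    (h : AppC Γ φ l₁ l₂ l₃) (h1 : Γ l₁' ⊆ Γ l₁) (h2 : Γ l₂' ⊆ Γ l₂) :
    AppC Γ φ l₁' l₂' l₃ := by
  obtain ⟨⟨l₄, l₅, hmem, s1, s2⟩, hS0, hS1, hS2, hF0, hF1, hF2⟩ := h
  refine ⟨⟨l₄, l₅, hmem, h1.trans s1, h2.trans s2⟩,
    fun n hn => ⟨h2.trans (hS0 n (h1 hn)).1, (hS0 n (h1 hn)).2⟩,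
    fun n hn => ⟨h2.trans (hS1 n (h1 hn)).1, (hS1 n (h1 hn)).2⟩,
    fun n hn => ⟨h2.trans (hS2 n (h1 hn)).1, (hS2 n (h1 hn)).2.1, (hS2 n (h1 hn)).2.2⟩,
    fun n hn => ⟨h2.trans (hF0 n (h1 hn)).1, (hF0 n (h1 hn)).2⟩,
    fun n hn => ⟨h2.trans (hF1 n (h1 hn)).1, (hF1 n (h1 hn)).2⟩,
    fun n hn => ⟨h2.trans (hF2 n (h1 hn)).1, (hF2 n (h1 hn)).2.1, (hF2 n (h1 hn)).2.2⟩⟩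

theorem sat_app {Γ : Label → Set Abs} {φ : Label → Bool} {t₁ t₂ : Term} {l : Label} :
    Sat Γ φ (.app t₁ l t₂) ↔
      Sat Γ φ t₁ ∧ Sat Γ φ t₂ ∧ AppC Γ φ t₁.label t₂.label l := by
  rw [Sat]

theorem sat_S {Γ : Label → Set Abs} {φ : Label → Bool} {n : ℕ} :
    Sat Γ φ (.S n) ↔
      Abs.S0 n ∈ Γ (.base n) ∧ (φ (.base n) = true → Sat Γ φ (tS n)) := by
  rw [Sat]

theorem sat_F {Γ : Label → Set Abs} {φ : Label → Bool} {n : ℕ} :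
    Sat Γ φ (.F n) ↔
      Abs.F0 n ∈ Γ (.base n) ∧
      (φ (.base n) = true →
        (∃ n₀, Abs.S0 n₀ ∈ Γ (.sub n .F0) ∨ Abs.F0 n₀ ∈ Γ (.sub n .F0)) →
        Γ (.sub n .F1) ⊆ Γ (.sub n .F3)) ∧
      (φ (.base n) = true →
        (∃ n₀, Abs.S1 n₀ ∈ Γ (.sub n .F0) ∨ Abs.S2 n₀ ∈ Γ (.sub n .F0) ∨
               Abs.F1 n₀ ∈ Γ (.sub n .F0) ∨ Abs.F2 n₀ ∈ Γ (.sub n .F0)) →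
        Sat Γ φ (tF n) ∧
        ∀ l₁ l₂, Abs.app l₁ l₂ ∈ Γ (.sub n .F0) →
          Γ l₁ ⊆ Γ (.sub n .FL) ∧ Γ l₂ ⊆ Γ (.sub n .FR)) := by
  rw [Sat]

/-- **SF Reduction Coherence Lemma.**
For any top-level labelled SF-reduction `t^l → t'^{l'}`, if `Γ, φ ⊨ t^l`
then (1) `Γ, φ ⊨ t'^{l'}` and (2) `Γ(l') ⊆ Γ(l)`. -/
theorem sf_reduction_coherence
    (Γ : Label → Set Abs) (φ : Label → Bool)
    (t t' : Term) (hred : Red t t') (h : Sat Γ φ t) :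
    Sat Γ φ t' ∧ Γ t'.label ⊆ Γ t.label := by
  cases hred with
  | S n l₄ l₅ l₆ f g x =>
    rw [sat_app] at h
    obtain ⟨h1, hx, hA6⟩ := h
    rw [sat_app] at h1
    obtain ⟨h2, hg, hA5⟩ := h1
    rw [sat_app] at h2
    obtain ⟨hS, hf, hA4⟩ := h2
    rw [sat_S] at hS
    obtain ⟨hS0, hStS⟩ := hS
    simp only [Term.label] at hA4 hA5 hA6 ⊢
    obtain ⟨hfsub, hS1⟩ := hA4.2.1 n hS0
    obtain ⟨hgsub, hS2⟩ := hA5.2.2.1 n hS1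
    obtain ⟨hxsub, hS3sub, hφ⟩ := hA6.2.2.2.1 n hS2
    have htS := hStS hφ
    rw [tS, sat_app, sat_app, sat_app] at htS
    simp only [Term.label] at htS
    obtain ⟨⟨_, _, hAL⟩, ⟨_, _, hAR⟩, hA3⟩ := htS
    refine ⟨?_, hS3sub⟩
    rw [sat_app, sat_app, sat_app]
    simp only [Term.label]
    exact ⟨⟨hf, hx, appC_mono hAL hfsub hxsub⟩, ⟨hg, hx, appC_mono hAR hgsub hxsub⟩, hA3⟩
  | Fatom n l₄ l₅ l₆ f x y hf =>
    rw [sat_app] at h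
    obtain ⟨h1, hy, hA6⟩ := h
    rw [sat_app] at h1
    obtain ⟨h2, hx, hA5⟩ := h1
    rw [sat_app] at h2
    obtain ⟨hF, hfs, hA4⟩ := h2
    rw [sat_F] at hF
    obtain ⟨hF0, hFcl1, _⟩ := hF
    simp only [Term.label] at hA4 hA5 hA6
    obtain ⟨hfsub, hF1⟩ := hA4.2.2.2.2.1 n hF0
    obtain ⟨hxsub, hF2⟩ := hA5.2.2.2.2.2.1 n hF1
    obtain ⟨hysub, hF3sub, hφ⟩ := hA6.2.2.2.2.2.2 n hF2
    have hatom : ∃ n₀, Abs.S0 n₀ ∈ Γ (.sub n .F0) ∨ Abs.F0 n₀ ∈ Γ (.sub n .F0) := by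
      rcases hf with ⟨m, rfl⟩ | ⟨m, rfl⟩
      · rw [sat_S] at hfs
        exact ⟨m, Or.inl (hfsub hfs.1)⟩
      · rw [sat_F] at hfs
        exact ⟨m, Or.inr (hfsub hfs.1)⟩
    exact ⟨hx, hxsub.trans ((hFcl1 hφ hatom).trans hF3sub)⟩
  | Ffact n l₂ l₄ l₅ l₆ u v x y hfact =>
    rw [sat_app] at h
    obtain ⟨h1, hy, hA6⟩ := h
    rw [sat_app] at h1
    obtain ⟨h2, hx, hA5⟩ := h1
    rw [sat_app] at h2
    obtain ⟨hF, huv, hA4⟩ := h2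
    rw [sat_F] at hF
    obtain ⟨hF0, _, hFcl2⟩ := hF
    rw [sat_app] at huv
    obtain ⟨hu, hv, hA2⟩ := huv
    simp only [Term.label] at hA4 hA5 hA6
    obtain ⟨hl2sub, hF1⟩ := hA4.2.2.2.2.1 n hF0
    obtain ⟨hxsub, hF2⟩ := hA5.2.2.2.2.2.1 n hF1
    obtain ⟨hysub, hF3sub, hφ⟩ := hA6.2.2.2.2.2.2 n hF2
    have hfact' : ∃ n₀, Abs.S1 n₀ ∈ Γ (.sub n .F0) ∨ Abs.S2 n₀ ∈ Γ (.sub n .F0) ∨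
        Abs.F1 n₀ ∈ Γ (.sub n .F0) ∨ Abs.F2 n₀ ∈ Γ (.sub n .F0) := by
      cases hfact with
      | S1 m l w =>
        rw [sat_S] at hu
        exact ⟨m, Or.inl (hl2sub (hA2.2.1 m hu.1).2)⟩
      | F1 m l w =>
        rw [sat_F] at hu
        exact ⟨m, Or.inr (Or.inr (Or.inl (hl2sub (hA2.2.2.2.2.1 m hu.1).2)))⟩
      | S2 m la lb w z =>
        rw [sat_app] at hu
        obtain ⟨huS, _, hAin⟩ := hu
        rw [sat_S] at huS
        have hS1m := (hAin.2.1 m huS.1).2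
        exact ⟨m, Or.inr (Or.inl (hl2sub (hA2.2.2.1 m hS1m).2))⟩
      | F2 m la lb w z =>
        rw [sat_app] at hu
        obtain ⟨huF, _, hAin⟩ := hu
        rw [sat_F] at huF
        have hF1m := (hAin.2.2.2.2.1 m huF.1).2
        exact ⟨m, Or.inr (Or.inr (Or.inr (hl2sub (hA2.2.2.2.2.2.1 m hF1m).2)))⟩
    obtain ⟨htF, happs⟩ := hFcl2 hφ hfact'
    rw [tF, sat_app, sat_app] at htF
    simp only [Term.label] at htF
    obtain ⟨⟨_, _, hAM⟩, _, hA3⟩ := htF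
    obtain ⟨la, lb, hmem, hua, hvb⟩ := hA2.1
    obtain ⟨hLa, hLb⟩ := happs la lb (hl2sub hmem)
    refine ⟨?_, hF3sub⟩
    rw [sat_app, sat_app]
    simp only [Term.label]
    exact ⟨⟨hy, hu, appC_mono hAM hysub (hua.trans hLa)⟩, hv,
      appC_mono hA3 (fun _ hh => hh) (hvb.trans hLb)⟩

end SF0CFA
end

section
/- For any labelled SF-reduction in a context, C[t^{l₁}]^{l₂} → C[t'^{l₁'}]^{l₂'} (where t^{l₁} → t'^{l₁'} is a top-level labelled SF-reduction and C is an arbitrary term context), if Γ, φ ⊨ C[t^{l₁}]^{l₂} then (1) Γ, φ ⊨ C[t'^{l₁'}]^{l₂'} and (2) Γ(l₂') ⊆ Γ(l₂). (SF Evaluation Coherence Theorem) -/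
/-!
Labelled SF-calculus and its 0CFA analysis, following
"0CFA for SF-calculus" (Lester).
-/

namespace SF0CFA

lemma sat_app_iff (Γ : Label → Set Abs) (φ : Label → Bool) (t₁ t₂ : Term) (l : Label) :
    Sat Γ φ (.app t₁ l t₂) ↔ Sat Γ φ t₁ ∧ Sat Γ φ t₂ ∧ AppC Γ φ t₁.label t₂.label l := by
  rw [Sat]

lemma sat_S_iff (Γ : Label → Set Abs) (φ : Label → Bool) (n : ℕ) :
    Sat Γ φ (.S n) ↔ Abs.S0 n ∈ Γ (.base n) ∧ (φ (.base n) = true → Sat Γ φ (tS n)) := by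
  rw [Sat]

lemma sat_F_iff (Γ : Label → Set Abs) (φ : Label → Bool) (n : ℕ) :
    Sat Γ φ (.F n) ↔
      Abs.F0 n ∈ Γ (.base n) ∧
      (φ (.base n) = true →
        (∃ n₀, Abs.S0 n₀ ∈ Γ (.sub n .F0) ∨ Abs.F0 n₀ ∈ Γ (.sub n .F0)) →
        Γ (.sub n .F1) ⊆ Γ (.sub n .F3)) ∧
      (φ (.base n) = true →
        (∃ n₀, Abs.S1 n₀ ∈ Γ (.sub n .F0) ∨ Abs.S2 n₀ ∈ Γ (.sub n .F0) ∨
               Abs.F1 n₀ ∈ Γ (.sub n .F0) ∨ Abs.F2 n₀ ∈ Γ (.sub n .F0)) →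
        Sat Γ φ (tF n) ∧
        ∀ l₁ l₂, Abs.app l₁ l₂ ∈ Γ (.sub n .F0) →
          Γ l₁ ⊆ Γ (.sub n .FL) ∧ Γ l₂ ⊆ Γ (.sub n .FR)) := by
  rw [Sat]

lemma AppC_mono {Γ : Label → Set Abs} {φ : Label → Bool} {l₁ l₂ l₃ l₁' l₂' : Label}
    (h : AppC Γ φ l₁ l₂ l₃) (h₁ : Γ l₁' ⊆ Γ l₁) (h₂ : Γ l₂' ⊆ Γ l₂) :
    AppC Γ φ l₁' l₂' l₃ := by
  obtain ⟨⟨l₄, l₅, hmem, ha, hb⟩, hS0, hS1, hS2, hF0, hF1, hF2⟩ := h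
  refine ⟨⟨l₄, l₅, hmem, h₁.trans ha, h₂.trans hb⟩, ?_, ?_, ?_, ?_, ?_, ?_⟩
  · intro n hn; exact ⟨h₂.trans (hS0 n (h₁ hn)).1, (hS0 n (h₁ hn)).2⟩
  · intro n hn; exact ⟨h₂.trans (hS1 n (h₁ hn)).1, (hS1 n (h₁ hn)).2⟩
  · intro n hn; exact ⟨h₂.trans (hS2 n (h₁ hn)).1, (hS2 n (h₁ hn)).2.1, (hS2 n (h₁ hn)).2.2⟩
  · intro n hn; exact ⟨h₂.trans (hF0 n (h₁ hn)).1, (hF0 n (h₁ hn)).2⟩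
  · intro n hn; exact ⟨h₂.trans (hF1 n (h₁ hn)).1, (hF1 n (h₁ hn)).2⟩
  · intro n hn; exact ⟨h₂.trans (hF2 n (h₁ hn)).1, (hF2 n (h₁ hn)).2.1, (hF2 n (h₁ hn)).2.2⟩

/-- The head of a factorable form puts an operator value into its label. -/
lemma factorable_abs {Γ : Label → Set Abs} {φ : Label → Bool} {u v : Term} {l₂ : Label}
    (hf : Factorable (.app u l₂ v)) (hs : Sat Γ φ (.app u l₂ v)) :
    ∃ m, Abs.S1 m ∈ Γ l₂ ∨ Abs.S2 m ∈ Γ l₂ ∨ Abs.F1 m ∈ Γ l₂ ∨ Abs.F2 m ∈ Γ l₂ := by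
  rw [sat_app_iff] at hs
  obtain ⟨hsu, hsv, hc⟩ := hs
  cases hf with
  | S1 m l u =>
      rw [sat_S_iff] at hsu
      exact ⟨m, Or.inl (hc.2.1 m hsu.1).2⟩
  | F1 m l u =>
      rw [sat_F_iff] at hsu
      exact ⟨m, Or.inr (Or.inr (Or.inl (hc.2.2.2.2.1 m hsu.1).2))⟩
  | S2 m la lb w v' =>
      rw [sat_app_iff] at hsu
      obtain ⟨hsm, _, hcu⟩ := hsu
      rw [sat_S_iff] at hsm
      have h1 : Abs.S1 m ∈ Γ la := (hcu.2.1 m hsm.1).2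
      exact ⟨m, Or.inr (Or.inl (hc.2.2.1 m h1).2)⟩
  | F2 m la lb w v' =>
      rw [sat_app_iff] at hsu
      obtain ⟨hsm, _, hcu⟩ := hsu
      rw [sat_F_iff] at hsm
      have h1 : Abs.F1 m ∈ Γ la := (hcu.2.2.2.2.1 m hsm.1).2
      exact ⟨m, Or.inr (Or.inr (Or.inr (hc.2.2.2.2.2.1 m h1).2))⟩

lemma red_coherence {Γ : Label → Set Abs} {φ : Label → Bool} {t t' : Term}
    (hred : Red t t') (h : Sat Γ φ t) :
    Sat Γ φ t' ∧ Γ t'.label ⊆ Γ t.label := by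
  cases hred with
  | S n l₄ l₅ l₆ f g x =>
      rw [sat_app_iff] at h
      obtain ⟨h1, hsx, hc6⟩ := h
      rw [sat_app_iff] at h1
      obtain ⟨h2, hsg, hc5⟩ := h1
      rw [sat_app_iff] at h2
      obtain ⟨hsS, hsf, hc4⟩ := h2
      rw [sat_S_iff] at hsS
      -- chase abstract values
      have hS0 : Abs.S0 n ∈ Γ (.base n) := hsS.1
      have e4 := hc4.2.1 n hS0
      have hfS0 : Γ f.label ⊆ Γ (.sub n .S0) := e4.1
      have e5 := hc5.2.2.1 n e4.2
      have hgS1 : Γ g.label ⊆ Γ (.sub n .S1) := e5.1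
      have e6 := hc6.2.2.2.1 n e5.2
      have hxS2 : Γ x.label ⊆ Γ (.sub n .S2) := e6.1
      have hS3 : Γ (.sub n .S3) ⊆ Γ l₆ := e6.2.1
      have hφ : φ (.base n) = true := e6.2.2
      have hts := hsS.2 hφ
      rw [tS, sat_app_iff, sat_app_iff, sat_app_iff] at hts
      obtain ⟨⟨_, _, cL⟩, ⟨_, _, cR⟩, c3⟩ := hts
      simp only [Term.label] at cL cR c3 ⊢
      refine ⟨?_, hS3⟩
      rw [sat_app_iff, sat_app_iff, sat_app_iff]
      exact ⟨⟨hsf, hsx, AppC_mono cL hfS0 hxS2⟩,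
             ⟨hsg, hsx, AppC_mono cR hgS1 hxS2⟩,
             c3⟩
  | Fatom n l₄ l₅ l₆ f t' y hf =>
      rw [sat_app_iff] at h
      obtain ⟨h1, hsy, hc6⟩ := h
      rw [sat_app_iff] at h1
      obtain ⟨h2, hsxx, hc5⟩ := h1
      rw [sat_app_iff] at h2
      obtain ⟨hsF, hsf, hc4⟩ := h2
      rw [sat_F_iff] at hsF
      have e4 := hc4.2.2.2.2.1 n hsF.1
      have hfF0 : Γ f.label ⊆ Γ (.sub n .F0) := e4.1
      have e5 := hc5.2.2.2.2.2.1 n e4.2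
      have hxF1 : Γ t'.label ⊆ Γ (.sub n .F1) := e5.1
      have e6 := hc6.2.2.2.2.2.2 n e5.2
      have hF3 : Γ (.sub n .F3) ⊆ Γ l₆ := e6.2.1
      have hφ : φ (.base n) = true := e6.2.2
      have hex : ∃ n₀, Abs.S0 n₀ ∈ Γ (.sub n .F0) ∨ Abs.F0 n₀ ∈ Γ (.sub n .F0) := by
        rcases hf with ⟨m, rfl⟩ | ⟨m, rfl⟩
        · rw [sat_S_iff] at hsf
          exact ⟨m, Or.inl (hfF0 hsf.1)⟩
        · rw [sat_F_iff] at hsf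
          exact ⟨m, Or.inr (hfF0 hsf.1)⟩
      have h13 := hsF.2.1 hφ hex
      simp only [Term.label]
      exact ⟨hsxx, fun a ha => hF3 (h13 (hxF1 ha))⟩
  | Ffact n l₂ l₄ l₅ l₆ u v x y hfact =>
      rw [sat_app_iff] at h
      obtain ⟨h1, hsy, hc6⟩ := h
      rw [sat_app_iff] at h1
      obtain ⟨h2, hsx, hc5⟩ := h1
      rw [sat_app_iff] at h2
      obtain ⟨hsF, hsuv, hc4⟩ := h2
      rw [sat_F_iff] at hsF
      have e4 := hc4.2.2.2.2.1 n hsF.1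
      have huvF0 : Γ (Term.label (.app u l₂ v)) ⊆ Γ (.sub n .F0) := e4.1
      simp only [Term.label] at huvF0
      have e5 := hc5.2.2.2.2.2.1 n e4.2
      have e6 := hc6.2.2.2.2.2.2 n e5.2
      have hyF2 : Γ y.label ⊆ Γ (.sub n .F2) := e6.1
      have hF3 : Γ (.sub n .F3) ⊆ Γ l₆ := e6.2.1
      have hφ : φ (.base n) = true := e6.2.2
      obtain ⟨m, hm⟩ := factorable_abs hfact hsuv
      have hex : ∃ n₀, Abs.S1 n₀ ∈ Γ (.sub n .F0) ∨ Abs.S2 n₀ ∈ Γ (.sub n .F0) ∨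
          Abs.F1 n₀ ∈ Γ (.sub n .F0) ∨ Abs.F2 n₀ ∈ Γ (.sub n .F0) := by
        refine ⟨m, ?_⟩
        rcases hm with h' | h' | h' | h'
        · exact Or.inl (huvF0 h')
        · exact Or.inr (Or.inl (huvF0 h'))
        · exact Or.inr (Or.inr (Or.inl (huvF0 h')))
        · exact Or.inr (Or.inr (Or.inr (huvF0 h')))
      obtain ⟨htf, hlr⟩ := hsF.2.2 hφ hex
      have hsuv' := hsuv
      rw [sat_app_iff] at hsuv'
      obtain ⟨hsu, hsv, hcuv⟩ := hsuv'
      obtain ⟨la, lb, hmem, hua, hvb⟩ := hcuv.1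
      have hab := hlr la lb (huvF0 hmem)
      have huL : Γ u.label ⊆ Γ (.sub n .FL) := hua.trans hab.1
      have hvR : Γ v.label ⊆ Γ (.sub n .FR) := hvb.trans hab.2
      rw [tF, sat_app_iff, sat_app_iff] at htf
      obtain ⟨⟨_, _, cM⟩, _, c3⟩ := htf
      simp only [Term.label] at cM c3 ⊢
      refine ⟨?_, hF3⟩
      rw [sat_app_iff, sat_app_iff]
      exact ⟨⟨hsy, hsu, AppC_mono cM hyF2 huL⟩, hsv,
             AppC_mono c3 (fun _ h => h) hvR⟩

/-- **SF Evaluation Coherence Theorem.**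
For any labelled SF-reduction in a context, `C[t^{l₁}]^{l₂} → C[t'^{l₁'}]^{l₂'}`
(where `t^{l₁} → t'^{l₁'}` is a top-level labelled SF-reduction and `C` is an
arbitrary term context), if `Γ, φ ⊨ C[t^{l₁}]^{l₂}` then
(1) `Γ, φ ⊨ C[t'^{l₁'}]^{l₂'}` and (2) `Γ(l₂') ⊆ Γ(l₂)`. -/
theorem sf_evaluation_coherence
    (Γ : Label → Set Abs) (φ : Label → Bool)
    (C : Ctx) (t t' : Term) (hred : Red t t')
    (h : Sat Γ φ (C.fill t)) :
    Sat Γ φ (C.fill t') ∧ Γ (C.fill t').label ⊆ Γ (C.fill t).label := by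
  induction C with
  | hole => exact red_coherence hred h
  | appL C l u ih =>
      simp only [Ctx.fill, sat_app_iff] at h ⊢
      obtain ⟨h1, h2, hc⟩ := h
      obtain ⟨h1', hsub⟩ := ih h1
      exact ⟨⟨h1', h2, AppC_mono hc hsub (fun _ h => h)⟩, fun _ h => h⟩
  | appR u l C ih =>
      simp only [Ctx.fill, sat_app_iff] at h ⊢
      obtain ⟨h1, h2, hc⟩ := h
      obtain ⟨h2', hsub⟩ := ih h2
      exact ⟨⟨h1, h2', AppC_mono hc (fun _ h => h) hsub⟩, fun _ h => h⟩

end SF0CFA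
end

section
/- Reduction in SF-calculus is confluent: for any SF-terms u, v, v', if u →* v and u →* v', then there exists an SF-term w such that v →* w and v' →* w. -/
/-!
SF-combinatory calculus (Given-Wilson & Jay), unlabelled.
-/

namespace SFCalc

/-- SF-terms: built from the two atoms `S` and `F` by binary application. -/
inductive SF : Type
  | S
  | F
  | app (a b : SF)
  deriving DecidableEq

/-- Factorable forms: terms of the shape `S`, `S u`, `S u v`, `F`, `F u`
or `F u v`. -/
inductive Factorable : SF → Prop
  | S : Factorable .S
  | F : Factorable .F
  | S1 (u : SF) : Factorable (.app .S u)
  | F1 (u : SF) : Factorable (.app .F u)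
  | S2 (u v : SF) : Factorable (.app (.app .S u) v)
  | F2 (u v : SF) : Factorable (.app (.app .F u) v)

/-- Top-level reduction rules: `S f g x → f x (g x)`; `F f x y → x` when `f`
is the atom `S` or the atom `F`; `F (u v) x y → y u v` when `u v` is a
factorable form. -/
inductive Red : SF → SF → Prop
  | S (f g x : SF) :
      Red (.app (.app (.app .S f) g) x) (.app (.app f x) (.app g x))
  | Fatom (f x y : SF) (hf : f = .S ∨ f = .F) :
      Red (.app (.app (.app .F f) x) y) x
  | Ffact (u v x y : SF) (hf : Factorable (.app u v)) :
      Red (.app (.app (.app .F (.app u v)) x) y) (.app (.app y u) v)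

/-- One-step reduction: the closure of the rules under arbitrary term
contexts. -/
inductive Step : SF → SF → Prop
  | red {a b : SF} : Red a b → Step a b
  | appL {a a' : SF} (b : SF) : Step a a' → Step (.app a b) (.app a' b)
  | appR (a : SF) {b b' : SF} : Step b b' → Step (.app a b) (.app a b')

/-- `→*`: the reflexive-transitive closure of one-step reduction. -/
def Steps : SF → SF → Prop := Relation.ReflTransGen Step

/-!
Tait–Martin-Löf: parallel reduction `Par` lies between `→` and `→*`, so it suffices that `Par`
has the diamond property, which is proved at each term by structural induction. A factorable
form reduces only componentwise. Hence the rules do not overlap, and the diamond property at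
`S f g` or `F (u v) x` passes down to `f`, `g`, `u`, `v`: this is what the redexes `S f g x` and
`F (u v) x y` need beyond the induction hypotheses for their two immediate subterms.
-/

inductive Par : SF → SF → Prop
  | S : Par .S .S
  | F : Par .F .F
  | app {a a' b b' : SF} : Par a a' → Par b b' → Par (.app a b) (.app a' b')
  | redS {f f' g g' x x' : SF} : Par f f' → Par g g' → Par x x' →
      Par (.app (.app (.app .S f) g) x) (.app (.app f' x') (.app g' x'))
  | redFatom {f x x' : SF} (y : SF) (hf : f = .S ∨ f = .F) : Par x x' →
      Par (.app (.app (.app .F f) x) y) x'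
  | redFfact {u u' v v' y y' : SF} (x : SF) (hf : Factorable (.app u v)) :
      Par u u' → Par v v' → Par y y' →
      Par (.app (.app (.app .F (.app u v)) x) y) (.app (.app y' u') v')

theorem Steps.app {a a' b b' : SF} (ha : Steps a a') (hb : Steps b b') :
    Steps (.app a b) (.app a' b') :=
  (ha.lift (SF.app · b) fun _ _ h => Step.appL b h).trans
    (hb.lift (SF.app a') fun _ _ h => Step.appR a' h)

namespace Par

theorem refl : ∀ a : SF, Par a a
  | .S => .S
  | .F => .F
  | .app a b => .app (refl a) (refl b)

theorem of_red {a b : SF} : Red a b → Par a b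
  | .S f g x => .redS (refl f) (refl g) (refl x)
  | .Fatom _ x y hf => .redFatom y hf (refl x)
  | .Ffact u v x y hf => .redFfact x hf (refl u) (refl v) (refl y)

theorem of_step {a b : SF} (h : Step a b) : Par a b := by
  induction h with
  | red h => exact of_red h
  | appL b _ ih => exact .app ih (refl b)
  | appR a _ ih => exact .app (refl a) ih

theorem steps {a b : SF} (h : Par a b) : Steps a b := by
  induction h with
  | S | F => exact .refl
  | app _ _ iha ihb => exact iha.app ihb
  | redS _ _ _ ihf ihg ihx => exact .head (.red (.S _ _ _)) ((ihf.app ihx).app (ihg.app ihx))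
  | redFatom y hf _ ihx => exact .head (.red (.Fatom _ _ y hf)) ihx
  | redFfact x hf _ _ _ ihu ihv ihy =>
    exact .head (.red (.Ffact _ _ x _ hf)) ((ihy.app ihu).app ihv)

theorem app_inv_of_factorable {a b t : SF} (hf : Factorable (.app a b)) (h : Par (.app a b) t) :
    ∃ a' b', t = .app a' b' ∧ Par a a' ∧ Par b b' := by
  cases hf <;> cases h <;> exact ⟨_, _, rfl, ‹_›, ‹_›⟩

theorem S2_inv {f g t : SF} (h : Par (.app (.app .S f) g) t) :
    ∃ f' g', t = .app (.app .S f') g' ∧ Par f f' ∧ Par g g' := by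
  obtain ⟨_, g', rfl, hSf, hg⟩ := h.app_inv_of_factorable (.S2 f g)
  obtain ⟨_, f', rfl, hS, hf⟩ := hSf.app_inv_of_factorable (.S1 f)
  cases hS
  exact ⟨f', g', rfl, hf, hg⟩

theorem F2_inv {f x t : SF} (h : Par (.app (.app .F f) x) t) :
    ∃ f' x', t = .app (.app .F f') x' ∧ Par f f' ∧ Par x x' := by
  obtain ⟨_, x', rfl, hFf, hx⟩ := h.app_inv_of_factorable (.F2 f x)
  obtain ⟨_, f', rfl, hF, hf⟩ := hFf.app_inv_of_factorable (.F1 f)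
  cases hF
  exact ⟨f', x', rfl, hf, hx⟩

end Par

theorem Factorable.par {a b : SF} (hf : Factorable a) (h : Par a b) : Factorable b := by
  cases hf with
  | S => cases h; exact .S
  | F => cases h; exact .F
  | S1 => obtain ⟨_, _, rfl, ⟨⟩, _⟩ := h.app_inv_of_factorable (.S1 _); exact .S1 _
  | F1 => obtain ⟨_, _, rfl, ⟨⟩, _⟩ := h.app_inv_of_factorable (.F1 _); exact .F1 _
  | S2 => obtain ⟨_, _, rfl, _, _⟩ := h.S2_inv; exact .S2 _ _
  | F2 => obtain ⟨_, _, rfl, _, _⟩ := h.F2_inv; exact .F2 _ _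

open Relation

def DiamondAt (a : SF) : Prop :=
  ∀ b c, Par a b → Par a c → Join Par b c

theorem DiamondAt.of_app_factorable {a b : SF} (h : DiamondAt (.app a b))
    (hf : Factorable (.app a b)) : DiamondAt a ∧ DiamondAt b := by
  have join_app {a₁ a₂ b₁ b₂} (h₁ : Par (.app a b) (.app a₁ b₁))
      (h₂ : Par (.app a b) (.app a₂ b₂)) : Join Par a₁ a₂ ∧ Join Par b₁ b₂ := by
    obtain ⟨d, hd₁, hd₂⟩ := h _ _ h₁ h₂
    obtain ⟨da, db, rfl, ha₁, hb₁⟩ := hd₁.app_inv_of_factorable (hf.par h₁)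
    obtain ⟨_, _, hd, ha₂, hb₂⟩ := hd₂.app_inv_of_factorable (hf.par h₂)
    cases hd
    exact ⟨⟨da, ha₁, ha₂⟩, ⟨db, hb₁, hb₂⟩⟩
  exact ⟨fun _ _ h₁ h₂ => (join_app (.app h₁ (.refl b)) (.app h₂ (.refl b))).1,
    fun _ _ h₁ h₂ => (join_app (.app (.refl a) h₁) (.app (.refl a) h₂)).2⟩

theorem DiamondAt.join_redS {f g x f₁ g₁ x₁ c : SF} (hfg : DiamondAt (.app (.app .S f) g))
    (hx : DiamondAt x) (hf₁ : Par f f₁) (hg₁ : Par g g₁) (hx₁ : Par x x₁)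
    (h : Par (.app (.app (.app .S f) g) x) c) :
    Join Par (.app (.app f₁ x₁) (.app g₁ x₁)) c := by
  obtain ⟨hSf, hg⟩ := hfg.of_app_factorable (.S2 f g)
  obtain ⟨-, hf⟩ := hSf.of_app_factorable (.S1 f)
  have close {f₂ g₂ x₂} (hf₂ : Par f f₂) (hg₂ : Par g g₂) (hx₂ : Par x x₂) :
      ∃ fd gd xd, Par f₁ fd ∧ Par f₂ fd ∧ Par g₁ gd ∧ Par g₂ gd ∧ Par x₁ xd ∧ Par x₂ xd := by
    obtain ⟨fd, hfd₁, hfd₂⟩ := hf _ _ hf₁ hf₂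
    obtain ⟨gd, hgd₁, hgd₂⟩ := hg _ _ hg₁ hg₂
    obtain ⟨xd, hxd₁, hxd₂⟩ := hx _ _ hx₁ hx₂
    exact ⟨fd, gd, xd, hfd₁, hfd₂, hgd₁, hgd₂, hxd₁, hxd₂⟩
  cases h with
  | app hSfg hx₂ =>
    obtain ⟨f₂, g₂, rfl, hf₂, hg₂⟩ := hSfg.S2_inv
    obtain ⟨_, _, _, hfd₁, hfd₂, hgd₁, hgd₂, hxd₁, hxd₂⟩ := close hf₂ hg₂ hx₂
    exact ⟨_, .app (.app hfd₁ hxd₁) (.app hgd₁ hxd₁), .redS hfd₂ hgd₂ hxd₂⟩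
  | redS hf₂ hg₂ hx₂ =>
    obtain ⟨_, _, _, hfd₁, hfd₂, hgd₁, hgd₂, hxd₁, hxd₂⟩ := close hf₂ hg₂ hx₂
    exact ⟨_, .app (.app hfd₁ hxd₁) (.app hgd₁ hxd₁), .app (.app hfd₂ hxd₂) (.app hgd₂ hxd₂)⟩

theorem DiamondAt.join_redFatom {f x y x₁ c : SF} (hf : f = .S ∨ f = .F)
    (hfx : DiamondAt (.app (.app .F f) x)) (hx₁ : Par x x₁)
    (h : Par (.app (.app (.app .F f) x) y) c) : Join Par x₁ c := by
  obtain ⟨-, hx⟩ := hfx.of_app_factorable (.F2 f x)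
  cases h with
  | app hFfx _ =>
    obtain ⟨f₂, x₂, rfl, hf₂, hx₂⟩ := hFfx.F2_inv
    have hf₂_atom : f₂ = .S ∨ f₂ = .F := by rcases hf with rfl | rfl <;> cases hf₂ <;> simp
    obtain ⟨xd, hxd₁, hxd₂⟩ := hx _ _ hx₁ hx₂
    exact ⟨xd, hxd₁, .redFatom _ hf₂_atom hxd₂⟩
  | redFatom _ _ hx₂ => exact hx _ _ hx₁ hx₂
  | redFfact => simp at hf

theorem DiamondAt.join_redFfact {u v x y u₁ v₁ y₁ c : SF} (huv : Factorable (.app u v))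
    (hFuvx : DiamondAt (.app (.app .F (.app u v)) x)) (hy : DiamondAt y)
    (hu₁ : Par u u₁) (hv₁ : Par v v₁) (hy₁ : Par y y₁)
    (h : Par (.app (.app (.app .F (.app u v)) x) y) c) :
    Join Par (.app (.app y₁ u₁) v₁) c := by
  obtain ⟨hFuv, -⟩ := hFuvx.of_app_factorable (.F2 _ x)
  obtain ⟨-, huv'⟩ := hFuv.of_app_factorable (.F1 _)
  obtain ⟨hu, hv⟩ := huv'.of_app_factorable huv
  have close {u₂ v₂ y₂} (hu₂ : Par u u₂) (hv₂ : Par v v₂) (hy₂ : Par y y₂) :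
      ∃ ud vd yd, Par u₁ ud ∧ Par u₂ ud ∧ Par v₁ vd ∧ Par v₂ vd ∧ Par y₁ yd ∧ Par y₂ yd := by
    obtain ⟨ud, hud₁, hud₂⟩ := hu _ _ hu₁ hu₂
    obtain ⟨vd, hvd₁, hvd₂⟩ := hv _ _ hv₁ hv₂
    obtain ⟨yd, hyd₁, hyd₂⟩ := hy _ _ hy₁ hy₂
    exact ⟨ud, vd, yd, hud₁, hud₂, hvd₁, hvd₂, hyd₁, hyd₂⟩
  cases h with
  | app hFuvx hy₂ =>
    obtain ⟨w₂, _, rfl, hw₂, _⟩ := hFuvx.F2_inv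
    obtain ⟨u₂, v₂, rfl, hu₂, hv₂⟩ := hw₂.app_inv_of_factorable huv
    obtain ⟨_, _, _, hud₁, hud₂, hvd₁, hvd₂, hyd₁, hyd₂⟩ := close hu₂ hv₂ hy₂
    exact ⟨_, .app (.app hyd₁ hud₁) hvd₁, .redFfact _ (huv.par hw₂) hud₂ hvd₂ hyd₂⟩
  | redFatom _ hf => simp at hf
  | redFfact _ _ hu₂ hv₂ hy₂ =>
    obtain ⟨_, _, _, hud₁, hud₂, hvd₁, hvd₂, hyd₁, hyd₂⟩ := close hu₂ hv₂ hy₂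
    exact ⟨_, .app (.app hyd₁ hud₁) hvd₁, .app (.app hyd₂ hud₂) hvd₂⟩

theorem DiamondAt.app {a b : SF} (ha : DiamondAt a) (hb : DiamondAt b) :
    DiamondAt (.app a b) := by
  intro c₁ c₂ h₁ h₂
  cases h₁ with
  | app ha₁ hb₁ =>
    cases h₂ with
    | app ha₂ hb₂ =>
      obtain ⟨ad, had₁, had₂⟩ := ha _ _ ha₁ ha₂
      obtain ⟨bd, hbd₁, hbd₂⟩ := hb _ _ hb₁ hb₂
      exact ⟨.app ad bd, .app had₁ hbd₁, .app had₂ hbd₂⟩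
    | redS hf hg hx => exact symm (ha.join_redS hb hf hg hx (.app ha₁ hb₁))
    | redFatom _ hf hx => exact symm (ha.join_redFatom hf hx (.app ha₁ hb₁))
    | redFfact _ huv hu hv hy => exact symm (ha.join_redFfact huv hb hu hv hy (.app ha₁ hb₁))
  | redS hf hg hx => exact ha.join_redS hb hf hg hx h₂
  | redFatom _ hf hx => exact ha.join_redFatom hf hx h₂
  | redFfact _ huv hu hv hy => exact ha.join_redFfact huv hb hu hv hy h₂

theorem Par.diamond : ∀ a : SF, DiamondAt a
  | .S => fun _ _ h₁ h₂ => by cases h₁; cases h₂; exact ⟨.S, .S, .S⟩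
  | .F => fun _ _ h₁ h₂ => by cases h₁; cases h₂; exact ⟨.F, .F, .F⟩
  | .app a b => (diamond a).app (diamond b)

theorem reflTransGen_par : ReflTransGen Par = Steps :=
  le_antisymm (reflTransGen_closed fun _ _ => Par.steps) (ReflTransGen.mono fun _ _ => Par.of_step)

/-- **Confluence of SF-calculus**: for any SF-terms `u, v, v'`, if `u →* v`
and `u →* v'`, then there exists an SF-term `w` such that `v →* w` and
`v' →* w`. -/
theorem sf_confluence (u v v' : SF) (h₁ : Steps u v) (h₂ : Steps u v') :
    ∃ w : SF, Steps v w ∧ Steps v' w := by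
  rw [← reflTransGen_par] at h₁ h₂ ⊢
  exact church_rosser (fun a b c hb hc => (Par.diamond a b c hb hc).imp
    fun _ hd => ⟨.single hd.1, .single hd.2⟩) h₁ h₂

end SFCalc
end

section
/- The theory of weak equality of SF-calculus is consistent: the atoms S and F are not weakly equal, i.e., S ≠_w F; hence there exist SF-terms u and v with u ≠_w v. -/
/-!
SF-combinatory calculus (Given-Wilson & Jay), unlabelled.
-/

namespace SFCalc

/-- Weak equality `=_w`: the symmetric, reflexive, transitive closure of
one-step reduction. -/
def WeakEq : SF → SF → Prop := Relation.EqvGen Step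

/- ### auxiliary development -/

inductive Par_s9 : SF → SF → Prop
  | S : Par_s9 .S .S
  | F : Par_s9 .F .F
  | app {a a' b b' : SF} : Par_s9 a a' → Par_s9 b b' → Par_s9 (.app a b) (.app a' b')
  | Srule {f f' g g' x x' : SF} : Par_s9 f f' → Par_s9 g g' → Par_s9 x x' →
      Par_s9 (.app (.app (.app .S f) g) x) (.app (.app f' x') (.app g' x'))
  | Fatom {x x' : SF} (f y : SF) (hf : f = .S ∨ f = .F) : Par_s9 x x' →
      Par_s9 (.app (.app (.app .F f) x) y) x'
  | Ffact {u u' v v' y y' : SF} (x : SF) (hf : Factorable (.app u v)) :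
      Par_s9 u u' → Par_s9 v v' → Par_s9 y y' →
      Par_s9 (.app (.app (.app .F (.app u v)) x) y) (.app (.app y' u') v')

theorem Par_s9.refl : ∀ a : SF, Par_s9 a a
  | .S => .S
  | .F => .F
  | .app a b => .app (Par_s9.refl a) (Par_s9.refl b)

theorem step_par {a b : SF} (h : Step a b) : Par_s9 a b := by
  induction h with
  | red h =>
    cases h with
    | S f g x => exact Par_s9.Srule (Par_s9.refl _) (Par_s9.refl _) (Par_s9.refl _)
    | Fatom f x y hf => exact Par_s9.Fatom _ _ hf (Par_s9.refl _)
    | Ffact u v x y hf => exact Par_s9.Ffact _ hf (Par_s9.refl _) (Par_s9.refl _) (Par_s9.refl _)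
  | appL b _ ih => exact .app ih (.refl b)
  | appR a _ ih => exact .app (.refl a) ih

theorem parS {t : SF} (h : Par_s9 .S t) : t = .S := by cases h; rfl
theorem parF {t : SF} (h : Par_s9 .F t) : t = .F := by cases h; rfl

theorem parS1 {u t : SF} (h : Par_s9 (.app .S u) t) :
    ∃ u', t = .app .S u' ∧ Par_s9 u u' := by
  cases h with
  | app h1 h2 => obtain rfl := parS h1; exact ⟨_, rfl, h2⟩

theorem parF1 {u t : SF} (h : Par_s9 (.app .F u) t) :
    ∃ u', t = .app .F u' ∧ Par_s9 u u' := by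
  cases h with
  | app h1 h2 => obtain rfl := parF h1; exact ⟨_, rfl, h2⟩

theorem parS2 {u v t : SF} (h : Par_s9 (.app (.app .S u) v) t) :
    ∃ u' v', t = .app (.app .S u') v' ∧ Par_s9 u u' ∧ Par_s9 v v' := by
  cases h with
  | app h1 h2 =>
    obtain ⟨u', rfl, hu⟩ := parS1 h1
    exact ⟨u', _, rfl, hu, h2⟩

theorem parF2 {u v t : SF} (h : Par_s9 (.app (.app .F u) v) t) :
    ∃ u' v', t = .app (.app .F u') v' ∧ Par_s9 u u' ∧ Par_s9 v v' := by
  cases h with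
  | app h1 h2 =>
    obtain ⟨u', rfl, hu⟩ := parF1 h1
    exact ⟨u', _, rfl, hu, h2⟩

/-- Parallel reduction of a factorable application is an application of
parallel reducts, and stays factorable. -/
theorem par_fact_inv {u v t : SF} (hf : Factorable (.app u v))
    (h : Par_s9 (.app u v) t) :
    ∃ u' v', t = .app u' v' ∧ Par_s9 u u' ∧ Par_s9 v v' ∧ Factorable (.app u' v') := by
  cases hf with
  | S1 u =>
    obtain ⟨u', rfl, hu⟩ := parS1 h
    exact ⟨_, _, rfl, .S, hu, .S1 _⟩
  | F1 u =>
    obtain ⟨u', rfl, hu⟩ := parF1 h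
    exact ⟨_, _, rfl, .F, hu, .F1 _⟩
  | S2 u v =>
    cases h with
    | app h1 h2 =>
      obtain ⟨u', rfl, hu⟩ := parS1 h1
      exact ⟨_, _, rfl, .app .S hu, h2, .S2 _ _⟩
  | F2 u v =>
    cases h with
    | app h1 h2 =>
      obtain ⟨u', rfl, hu⟩ := parF1 h1
      exact ⟨_, _, rfl, .app .F hu, h2, .F2 _ _⟩

def sz : SF → Nat
  | .S => 1
  | .F => 1
  | .app a b => sz a + sz b + 1

theorem diamond_aux :
    ∀ n, ∀ a b c : SF, sz a ≤ n → Par_s9 a b → Par_s9 a c →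
      ∃ d, Par_s9 b d ∧ Par_s9 c d := by
  intro n
  induction n with
  | zero => intro a b c hn h1 h2; cases a <;> simp [sz] at hn
  | succ n ih =>
    intro a b c hn h1 h2
    cases h1 with
    | S => obtain rfl := parS h2; exact ⟨.S, .S, .S⟩
    | F => obtain rfl := parF h2; exact ⟨.F, .F, .F⟩
    | @app a1 a1' a2 a2' ha hb =>
      cases h2 with
      | @app _ c1' _ c2' ha2 hb2 =>
        have h1n : sz a1 ≤ n := by simp [sz] at hn; omega
        have h2n : sz a2 ≤ n := by simp [sz] at hn; omega
        obtain ⟨d1, p1, q1⟩ := ih a1 _ _ h1n ha ha2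
        obtain ⟨d2, p2, q2⟩ := ih a2 _ _ h2n hb hb2
        exact ⟨.app d1 d2, .app p1 p2, .app q1 q2⟩
      | @Srule f f2 g g2 _ x2 hf hg hx =>
        obtain ⟨f1, g1, rfl, hf1, hg1⟩ := parS2 ha
        have hfn : sz f ≤ n := by simp [sz] at hn; omega
        have hgn : sz g ≤ n := by simp [sz] at hn; omega
        have hxn : sz a2 ≤ n := by simp [sz] at hn; omega
        obtain ⟨f3, pf1, pf2⟩ := ih f _ _ hfn hf1 hf
        obtain ⟨g3, pg1, pg2⟩ := ih g _ _ hgn hg1 hg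
        obtain ⟨x3, px1, px2⟩ := ih a2 _ _ hxn hb hx
        exact ⟨.app (.app f3 x3) (.app g3 x3), .Srule pf1 pg1 px1,
          .app (.app pf2 px2) (.app pg2 px2)⟩
      | @Fatom x _ f _ hfS hpar =>
        obtain ⟨f1, x1, rfl, hff, hx1⟩ := parF2 ha
        have hf1 : f1 = f := by
          rcases hfS with rfl | rfl
          · exact parS hff
          · exact parF hff
        subst hf1
        have hxn : sz x ≤ n := by simp [sz] at hn; omega
        obtain ⟨x3, p1, p2⟩ := ih x _ _ hxn hx1 hpar
        exact ⟨x3, .Fatom _ a2' hfS p1, p2⟩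
      | @Ffact u u2 v v2 _ y2 xx hfact hu hv hy =>
        obtain ⟨w, x1, rfl, hw, hx1⟩ := parF2 ha
        obtain ⟨u1, v1, rfl, hu1, hv1, hfact1⟩ := par_fact_inv hfact hw
        have hun : sz u ≤ n := by simp [sz] at hn; omega
        have hvn : sz v ≤ n := by simp [sz] at hn; omega
        have hyn : sz a2 ≤ n := by simp [sz] at hn; omega
        obtain ⟨u3, pu1, pu2⟩ := ih u _ _ hun hu1 hu
        obtain ⟨v3, pv1, pv2⟩ := ih v _ _ hvn hv1 hv
        obtain ⟨y3, py1, py2⟩ := ih a2 _ _ hyn hb hy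
        exact ⟨.app (.app y3 u3) v3, .Ffact x1 hfact1 pu1 pv1 py1,
          .app (.app py2 pu2) pv2⟩
    | @Srule f f1 g g1 x x1 hf hg hx =>
      cases h2 with
      | @app _ c1' _ c2' ha2 hb2 =>
        obtain ⟨f2, g2, rfl, hf2, hg2⟩ := parS2 ha2
        have hfn : sz f ≤ n := by simp [sz] at hn; omega
        have hgn : sz g ≤ n := by simp [sz] at hn; omega
        have hxn : sz x ≤ n := by simp [sz] at hn; omega
        obtain ⟨f3, pf1, pf2'⟩ := ih f _ _ hfn hf hf2
        obtain ⟨g3, pg1, pg2'⟩ := ih g _ _ hgn hg hg2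
        obtain ⟨x3, px1, px2⟩ := ih x _ _ hxn hx hb2
        exact ⟨.app (.app f3 x3) (.app g3 x3),
          .app (.app pf1 px1) (.app pg1 px1), .Srule pf2' pg2' px2⟩
      | @Srule _ f2 _ g2 _ x2 hf2 hg2 hx2 =>
        have hfn : sz f ≤ n := by simp [sz] at hn; omega
        have hgn : sz g ≤ n := by simp [sz] at hn; omega
        have hxn : sz x ≤ n := by simp [sz] at hn; omega
        obtain ⟨f3, pf1, pf2'⟩ := ih f _ _ hfn hf hf2
        obtain ⟨g3, pg1, pg2'⟩ := ih g _ _ hgn hg hg2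
        obtain ⟨x3, px1, px2⟩ := ih x _ _ hxn hx hx2
        exact ⟨.app (.app f3 x3) (.app g3 x3),
          .app (.app pf1 px1) (.app pg1 px1),
          .app (.app pf2' px2) (.app pg2' px2)⟩
    | @Fatom x _ f y hfS hx =>
      cases h2 with
      | @app _ c1' _ c2' ha2 hb2 =>
        obtain ⟨f2, x2, rfl, hff, hx2⟩ := parF2 ha2
        have hf2 : f2 = f := by
          rcases hfS with rfl | rfl
          · exact parS hff
          · exact parF hff
        subst hf2
        have hxn : sz x ≤ n := by simp [sz] at hn; omega
        obtain ⟨x3, p1, p2⟩ := ih x _ _ hxn hx hx2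
        exact ⟨x3, p1, .Fatom _ c2' hfS p2⟩
      | @Fatom _ _ _ _ hfS2 hx2 =>
        have hxn : sz x ≤ n := by simp [sz] at hn; omega
        obtain ⟨x3, p1, p2⟩ := ih x _ _ hxn hx hx2
        exact ⟨x3, p1, p2⟩
      | @Ffact _ _ _ _ _ _ _ _ _ _ _ => simp at hfS
    | @Ffact u u1 v v1 y y1 x hfact hu hv hy =>
      cases h2 with
      | @app _ c1' _ c2' ha2 hb2 =>
        obtain ⟨w, x2, rfl, hw, hx2⟩ := parF2 ha2
        obtain ⟨u2, v2, rfl, hu2, hv2, hfact2⟩ := par_fact_inv hfact hw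
        have hun : sz u ≤ n := by simp [sz] at hn; omega
        have hvn : sz v ≤ n := by simp [sz] at hn; omega
        have hyn : sz y ≤ n := by simp [sz] at hn; omega
        obtain ⟨u3, pu1, pu2'⟩ := ih u _ _ hun hu hu2
        obtain ⟨v3, pv1, pv2'⟩ := ih v _ _ hvn hv hv2
        obtain ⟨y3, py1, py2'⟩ := ih y _ _ hyn hy hb2
        exact ⟨.app (.app y3 u3) v3, .app (.app py1 pu1) pv1,
          .Ffact x2 hfact2 pu2' pv2' py2'⟩
      | @Ffact _ u2 _ v2 _ y2 _ hfact2 hu2 hv2 hy2 =>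
        have hun : sz u ≤ n := by simp [sz] at hn; omega
        have hvn : sz v ≤ n := by simp [sz] at hn; omega
        have hyn : sz y ≤ n := by simp [sz] at hn; omega
        obtain ⟨u3, pu1, pu2'⟩ := ih u _ _ hun hu hu2
        obtain ⟨v3, pv1, pv2'⟩ := ih v _ _ hvn hv hv2
        obtain ⟨y3, py1, py2'⟩ := ih y _ _ hyn hy hy2
        exact ⟨.app (.app y3 u3) v3, .app (.app py1 pu1) pv1,
          .app (.app py2' pu2') pv2'⟩
      | @Fatom _ _ _ _ hfS2 hx2 => simp at hfS2

theorem par_diamond {a b c : SF} (h1 : Par_s9 a b) (h2 : Par_s9 a c) :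
    ∃ d, Par_s9 b d ∧ Par_s9 c d :=
  diamond_aux (sz a) a b c le_rfl h1 h2

theorem cr {a b c : SF} (hab : Relation.ReflTransGen Par_s9 a b)
    (hac : Relation.ReflTransGen Par_s9 a c) :
    Relation.Join (Relation.ReflTransGen Par_s9) b c :=
  Relation.church_rosser (fun _ _ _ h1 h2 => by
    obtain ⟨d, hbd, hcd⟩ := par_diamond h1 h2
    exact ⟨d, Relation.ReflGen.single hbd, Relation.ReflTransGen.single hcd⟩)
    hab hac

theorem weakEq_join {a b : SF} (h : WeakEq a b) :
    Relation.Join (Relation.ReflTransGen Par_s9) a b := by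
  induction h with
  | rel a b h => exact ⟨b, Relation.ReflTransGen.single (step_par h), .refl⟩
  | refl a => exact ⟨a, .refl, .refl⟩
  | symm _ _ _ ih => obtain ⟨d, h1, h2⟩ := ih; exact ⟨d, h2, h1⟩
  | trans _ _ _ _ _ ih1 ih2 =>
    obtain ⟨d1, had1, hbd1⟩ := ih1
    obtain ⟨d2, hbd2, hcd2⟩ := ih2
    obtain ⟨e, h1, h2⟩ := cr hbd1 hbd2
    exact ⟨e, had1.trans h1, hcd2.trans h2⟩

theorem rtg_par_S {d : SF} (h : Relation.ReflTransGen Par_s9 .S d) : d = .S := by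
  induction h with
  | refl => rfl
  | tail _ hstep ih => subst ih; exact parS hstep

theorem rtg_par_F {d : SF} (h : Relation.ReflTransGen Par_s9 .F d) : d = .F := by
  induction h with
  | refl => rfl
  | tail _ hstep ih => subst ih; exact parF hstep

/-- **Consistency of the theory of weak equality of SF-calculus**:
the atoms `S` and `F` are not weakly equal, i.e. `S ≠_w F`;
hence there exist SF-terms `u` and `v` with `u ≠_w v`. -/
theorem sf_weak_equality_consistent :
    ¬ WeakEq .S .F ∧ ∃ u v : SF, ¬ WeakEq u v := by
  have hSF : ¬ WeakEq .S .F := by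
    intro h
    obtain ⟨d, hS, hF⟩ := weakEq_join h
    rw [rtg_par_S hS] at hF
    exact absurd (rtg_par_F hF) (by simp)
  exact ⟨hSF, .S, .F, hSF⟩

end SFCalc
end

section
/- The translation unlambda from λ-calculus to SK-calculus is a left inverse of the translation lambda from SK-calculus to λ-calculus: for every SK-term t, unlambda(lambda(t)) = t. -/
/-!
The translations `lambda` (SK-calculus → λ-calculus) and `unlambda`
(λ-calculus → SK-calculus with variables), and the fact that `unlambda`
is a left inverse of `lambda`.
-/

namespace SKLambda

/-- Pure SK-terms: built from the atoms `S` and `K` by binary application. -/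
inductive SK : Type
  | S
  | K
  | app (a b : SK)
  deriving DecidableEq

/-- λ-terms over natural-number variables: variables, application and
λ-abstraction. -/
inductive Lam : Type
  | var (x : ℕ)
  | app (a b : Lam)
  | lam (x : ℕ) (e : Lam)
  deriving DecidableEq

/-- SK-terms with variables (the codomain of `unlambda`). -/
inductive SKV : Type
  | S
  | K
  | var (x : ℕ)
  | app (a b : SKV)
  deriving DecidableEq

/-- The embedding of pure SK-terms into SK-terms with variables. -/
def SK.toSKV : SK → SKV
  | .S => .S
  | .K => .K
  | .app a b => .app a.toSKV b.toSKV

/-- The translation `lambda` from SK-terms to λ-terms: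
`lambda S = λf.λg.λx. f x (g x)`, `lambda K = λx.λy. x`, homomorphic on
applications (using `f = 0`, `g = 1`, `x = 2` resp. `x = 0`, `y = 1`). -/
def lambda : SK → Lam
  | .S => .lam 0 (.lam 1 (.lam 2
      (.app (.app (.var 0) (.var 2)) (.app (.var 1) (.var 2)))))
  | .K => .lam 0 (.lam 1 (.var 0))
  | .app a b => .app (lambda a) (lambda b)

/-- `x` occurs free in an SK-term with variables. -/
def SKV.free (x : ℕ) : SKV → Bool
  | .S => false
  | .K => false
  | .var y => y == x
  | .app a b => SKV.free x a || SKV.free x b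

/-- Abstraction of the variable `x` from an SK-term with variables
(the paper's `unlambda_x`; note `unlambda` is the identity on SK-terms, so
`K unlambda(e)` is written `K e` below):
`unlambda_x(x) = S K K`; `unlambda_x(e) = K e` if `x` is not free in `e`;
`unlambda_x(e x) = e` if `x` is not free in `e`;
`unlambda_x(e₁ e₂) = S unlambda_x(e₁) unlambda_x(e₂)` otherwise. -/
def unlambdaVar (x : ℕ) : SKV → SKV
  | .var y => if y = x then .app (.app .S .K) .K else .app .K (.var y)
  | .S => .app .K .S
  | .K => .app .K .K
  | .app e₁ e₂ =>
      if SKV.free x (.app e₁ e₂) = false then .app .K (.app e₁ e₂)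
      else if e₂ = .var x ∧ SKV.free x e₁ = false then e₁
      else .app (.app .S (unlambdaVar x e₁)) (unlambdaVar x e₂)

/-- The translation `unlambda` from λ-terms to SK-terms with variables:
`unlambda(x) = x`, `unlambda(e₁ e₂) = unlambda(e₁) unlambda(e₂)`,
`unlambda(λx.e) = unlambda_x(e)` (where, as in the paper's clause
`unlambda_x(λy.e) = unlambda_x(unlambda(λy.e))`, inner λ-abstractions are
translated before the abstraction of `x` is performed). -/
def unlambda : Lam → SKV
  | .var x => .var x
  | .app a b => .app (unlambda a) (unlambda b)
  | .lam x e => unlambdaVar x (unlambda e)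

/-- **`unlambda` is a left inverse of `lambda`**: for every SK-term `t`,
`unlambda (lambda t) = t`. -/
theorem unlambda_lambda (t : SK) : unlambda (lambda t) = t.toSKV := by
  induction t with
  | S => decide
  | K => decide
  | app a b ha hb => simp [lambda, unlambda, SK.toSKV, ha, hb]

end SKLambda
end

section
/- In SF-calculus, the term F F simulates the K combinator of SK-calculus: for all SF-terms x and y, F F x y → x, and hence the translation from SK-calculus into SF-calculus that sends S to S, K to F F, and preserves application maps every top-level SK-reduction step to a sequence of SF-reduction steps (one step for K, one step for S). -/
/-!
SF-combinatory calculus (Given-Wilson & Jay), unlabelled.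
-/

namespace SFCalc

/-- SK-terms: built from the atoms `S` and `K` by binary application. -/
inductive SK : Type
  | S
  | K
  | app (a b : SK)
  deriving DecidableEq

/-- Top-level SK-reduction rules: `K x y → x` and `S f g x → f x (g x)`. -/
inductive SKRed : SK → SK → Prop
  | K (x y : SK) : SKRed (.app (.app .K x) y) x
  | S (f g x : SK) :
      SKRed (.app (.app (.app .S f) g) x) (.app (.app f x) (.app g x))

/-- The translation from SK-calculus into SF-calculus: `S ↦ S`, `K ↦ F F`,
preserving application. -/
def sk2sf : SK → SF
  | .S => .S
  | .K => .app .F .F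
  | .app a b => .app (sk2sf a) (sk2sf b)

/-- **`F F` simulates `K`**: for all SF-terms `x` and `y`, `F F x y → x`
(a top-level SF-reduction), and hence the translation `sk2sf` maps every
top-level SK-reduction step to a single SF-reduction step
(one step for `K`, one step for `S`). -/
theorem ff_simulates_k :
    (∀ x y : SF, Red (.app (.app (.app .F .F) x) y) x) ∧
    (∀ t t' : SK, SKRed t t' → Step (sk2sf t) (sk2sf t')) := by
  constructor
  · intro x y
    exact Red.Fatom .F x y (Or.inr rfl)
  · intro t t' h
    cases h with
    | K x y => exact Step.red (Red.Fatom .F _ _ (Or.inr rfl))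
    | S f g x => exact Step.red (Red.S _ _ _)

end SFCalc
end
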